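/- arXiv:2603.16704 — 9 statements merged into one kernel-verified Lean document; each statement's English description precedes it below -/
import Mathlib

section
/- Let X be a set and f : X → X a function with no fixed points. Then there exists a partition of X into three sets A₁, A₂, A₃ such that f(Aᵢ) ∩ Aᵢ = ∅ for each i = 1, 2, 3. -/
/-!
Join every `x` to `f x`. On any finite set `s` this graph has at most `#s` edges, since each
comes from a vertex of `s` together with its image, so some vertex of `s` has at most two
neighbours in `s`. Removing it and coloring greedily, every finite part of the graph is
3-colorable, and by compactness (De Bruijn–Erdős) so is the whole graph. Since `f` has no
fixed points, `x` and `f x` are adjacent, so the color classes are the required parts.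
-/

open Finset

namespace SimpleGraph

variable {V : Type*} (G : SimpleGraph V)

open Classical in
def IsDegenerate (k : ℕ) : Prop :=
  ∀ s : Finset V, s.Nonempty → ∃ v ∈ s, #{w ∈ s | G.Adj v w} ≤ k

variable {G}

theorem IsDegenerate.exists_coloring_on_finset {k : ℕ}
    (hG : G.IsDegenerate k) (s : Finset V) :
    ∃ c : V → Fin (k + 1), ∀ v ∈ s, ∀ w ∈ s, G.Adj v w → c v ≠ c w := by
  classical
  induction s using Finset.strongInduction with
  | _ s ih =>
    rcases s.eq_empty_or_nonempty with rfl | hs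
    · exact ⟨0, by simp⟩
    obtain ⟨v, hv, hdeg⟩ := hG s hs
    obtain ⟨c, hc⟩ := ih (s.erase v) (erase_ssubset hv)
    obtain ⟨a, -, ha⟩ : ∃ a, a ∈ (univ : Finset (Fin (k + 1))) ∧
        a ∉ {w ∈ s | G.Adj v w}.image c :=
      exists_mem_notMem_of_card_lt_card <| by
        simpa using card_image_le.trans_lt (Nat.lt_succ_of_le hdeg)
    have hnbr : ∀ w ∈ s, G.Adj v w → c w ≠ a := fun w hw hvw hwa =>
      ha (mem_image.2 ⟨w, mem_filter.2 ⟨hw, hvw⟩, hwa⟩)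
    refine ⟨Function.update c v a, fun x hx y hy hxy => ?_⟩
    rcases eq_or_ne x v with rfl | hxv
    · rw [Function.update_self, Function.update_of_ne hxy.ne.symm]
      exact (hnbr y hy hxy).symm
    rcases eq_or_ne y v with rfl | hyv
    · rw [Function.update_self, Function.update_of_ne hxv]
      exact hnbr x hx hxy.symm
    rw [Function.update_of_ne hxv, Function.update_of_ne hyv]
    exact hc x (mem_erase.2 ⟨hxv, hx⟩) y (mem_erase.2 ⟨hyv, hy⟩) hxy

theorem IsDegenerate.colorable {k : ℕ} (hG : G.IsDegenerate k) : G.Colorable (k + 1) := by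
  classical
  refine nonempty_hom_of_forall_finite_subgraph_hom fun G' hfin => ?_
  choose c hc using hG.exists_coloring_on_finset hfin.toFinset
  refine ⟨fun v => c v, fun {v w} hvw => ?_⟩
  exact (top_adj _ _).2 <| hc v (by simp) w (by simp) (G'.adj_sub hvw)

open Classical in
theorem isDegenerate_fromRel_apply_eq {X : Type*} (f : X → X) :
    (fromRel fun x y => f x = y).IsDegenerate 2 := by
  intro s hs
  refine exists_le_of_sum_le (g := fun _ => 2) hs <|
    (sum_le_sum fun v _ => (?_ : _ ≤ 1 + #{w ∈ s | f w = v})).trans ?_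
  · calc _ ≤ #({f v} ∪ {w ∈ s | f w = v}) := card_le_card fun w hw => by
            simp only [mem_filter, fromRel_adj] at hw
            rcases hw with ⟨hw, -, rfl | hwv⟩ <;> simp [*]
      _ ≤ 1 + #{w ∈ s | f w = v} := card_union_le _ _
  · have hfib : ∑ v ∈ s, #{w ∈ s | f w = v} ≤ #s :=
      (sum_card_fiberwise_eq_card_filter s s f).trans_le (card_filter_le _ _)
    simp only [sum_add_distrib, sum_const, smul_eq_mul]
    omega

end SimpleGraph

/-- Katětov's lemma: any fixed-point-free function admits a 3-part partition
each part of which is moved off itself. -/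
theorem katetov_lemma {X : Type*} (f : X → X) (hf : ∀ x, f x ≠ x) :
    ∃ A : Fin 3 → Set X, (∀ x, ∃! i, x ∈ A i) ∧
      ∀ i, f '' A i ∩ A i = ∅ := by
  obtain ⟨c⟩ := (SimpleGraph.isDegenerate_fromRel_apply_eq f).colorable
  refine ⟨fun i => c ⁻¹' {i}, fun x => ⟨c x, rfl, fun j hj => hj.symm⟩, fun i => ?_⟩
  refine Set.eq_empty_of_forall_notMem ?_
  rintro _ ⟨⟨x, hx, rfl⟩, hfx⟩
  exact c.valid ((SimpleGraph.fromRel_adj _ _ _).2 ⟨(hf x).symm, .inl rfl⟩) (hx.trans hfx.symm)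
end

section
/- Let X be a set and f₁, …, fₙ : X → X functions, each with no fixed points. Then there is a partition of X into 3ⁿ sets A₁, …, A_{3ⁿ} such that fₖ(Aᵢ) ∩ Aᵢ = ∅ for every k = 1, …, n and every i = 1, …, 3ⁿ. -/
/-!
Call `c : X → Fin 3` a coloring for `f` if `c (f x) ≠ c x` for all `x`. For finite constraint sets
a coloring is built greedily: by pigeonhole some `y ∈ S` has at most one `f`-preimage in `S`, so
`y` has at most two neighbours `f y` and that preimage, and a coloring of `S \ {y}` extends to `y`.
Compactness of `X → Fin 3` (Tychonoff) yields a coloring of all of `X`. Colorings for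
`f₁, …, fₙ` combine into a map `X → Fin 3 ^ n`, whose fibers are the required parts.
-/

open Finset Function

namespace Function

variable {X : Type*} {f : X → X}

theorem exists_fin_three_coloring_apply_ne_of_finset (hf : ∀ x, f x ≠ x) (S : Finset X) :
    ∃ c : X → Fin 3, ∀ x ∈ S, f x ∈ S → c (f x) ≠ c x := by
  classical
  induction S using Finset.strongInduction with
  | H S ih =>
  rcases S.eq_empty_or_nonempty with rfl | hS
  · exact ⟨0, by simp⟩
  obtain ⟨y, hyS, hy⟩ : ∃ y ∈ S, #{x ∈ S | f x = y} ≤ 1 :=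
    exists_card_fiber_le_of_card_le_mul hS (mul_one _).ge
  obtain ⟨c, hc⟩ := ih (S.erase y) (erase_ssubset hyS)
  set N := insert (f y) {x ∈ S | f x = y}
  obtain ⟨a, -, ha⟩ : ∃ a ∈ (univ : Finset (Fin 3)), a ∉ N.image c := by
    refine exists_mem_notMem_of_card_lt_card ?_
    calc #(N.image c) ≤ #N := card_image_le
      _ ≤ 2 := (card_insert_le _ _).trans (by omega)
      _ < #(univ : Finset (Fin 3)) := by simp
  refine ⟨update c y a, fun x hx hfx => ?_⟩
  by_cases hxy : x = y
  · subst hxy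
    rw [update_self, update_of_ne (hf x)]
    exact fun h => ha (h ▸ mem_image_of_mem c (mem_insert_self _ _))
  by_cases hfxy : f x = y
  · rw [hfxy, update_self, update_of_ne hxy]
    exact fun h => ha (h ▸ mem_image_of_mem c (mem_insert_of_mem (mem_filter.2 ⟨hx, hfxy⟩)))
  rw [update_of_ne hfxy, update_of_ne hxy]
  exact hc x (mem_erase.2 ⟨hxy, hx⟩) (mem_erase.2 ⟨hfxy, hfx⟩)

theorem exists_fin_three_coloring_apply_ne (hf : ∀ x, f x ≠ x) :
    ∃ c : X → Fin 3, ∀ x, c (f x) ≠ c x := by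
  classical
  have hfin (u : Finset X) : (Set.univ ∩ ⋂ x ∈ u, {c : X → Fin 3 | c (f x) ≠ c x}).Nonempty := by
    obtain ⟨c, hc⟩ := exists_fin_three_coloring_apply_ne_of_finset hf (u ∪ u.image f)
    exact ⟨c, trivial, Set.mem_iInter₂.2 fun x hx =>
      hc x (mem_union_left _ hx) (mem_union_right _ (mem_image_of_mem f hx))⟩
  obtain ⟨c, -, hc⟩ := isCompact_univ.inter_iInter_nonempty _
    (fun x => (isClosed_discrete {p : Fin 3 × Fin 3 | p.1 ≠ p.2}).preimage
      (f := fun c : X → Fin 3 => (c (f x), c x)) (by fun_prop)) hfin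
  exact ⟨c, Set.mem_iInter.1 hc⟩

end Function

/-- Iterated Katětov lemma for finitely many fixed-point-free functions. -/
theorem katetov_lemma_iterated {X : Type*} (n : ℕ) (f : Fin n → X → X)
    (hf : ∀ k x, f k x ≠ x) :
    ∃ A : Fin (3 ^ n) → Set X, (∀ x, ∃! i, x ∈ A i) ∧
      ∀ k i, f k '' A i ∩ A i = ∅ := by
  choose c hc using fun k => exists_fin_three_coloring_apply_ne (hf k)
  let C : X → Fin (3 ^ n) := fun x => finFunctionFinEquiv fun k => c k x
  refine ⟨fun i => C ⁻¹' {i}, fun x => ⟨C x, rfl, fun i hi => hi.symm⟩, fun k i => ?_⟩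
  refine Set.eq_empty_of_forall_notMem ?_
  rintro _ ⟨⟨x, hx, rfl⟩, hfx⟩
  exact hc k x (congrFun (finFunctionFinEquiv.injective (hfx.trans hx.symm)) k)
end

section
/- Let Γ be a group and let s ∈ Γ with s ≠ e. Then there is a partition Γ = A₁ ⊔ A₂ ⊔ A₃ such that sAᵢ ∩ Aᵢ = ∅ for each i = 1, 2, 3. -/
/-!
Choose a representative `ρ x` of each orbit of `⟨s⟩` acting on `Γ` by left multiplication and
write `x = s ^ k * ρ x`. The exponent `k`, read in `ZMod (orderOf s)` (which is `ℤ` when `s` has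
infinite order), goes up by one under `x ↦ s * x`. For `n ≠ 1` there is a colouring of `ZMod n`
by three colours that changes at every step `v ↦ v + 1` (parity on `ℤ`, the tricolouring of the
cycle graph otherwise); the colour classes pulled back to `Γ` are the `Aᵢ`.
-/

open SimpleGraph in
theorem ZMod.exists_fin_three_coloring_add_one {n : ℕ} (hn : n ≠ 1) :
    ∃ c : ZMod n → Fin 3, ∀ v, c (v + 1) ≠ c v := by
  match n, hn with
  | 0, _ =>
    change ∃ c : ℤ → Fin 3, ∀ v, c (v + 1) ≠ c v
    refine ⟨fun v => if Even v then 0 else 1, fun v => ?_⟩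
    by_cases hv : Even v <;> simp [hv]
  | n + 2, _ =>
    let c := cycleGraph.tricoloring (n + 2) (by omega)
    exact ⟨c, fun v => c.valid (cycleGraph_adj.mpr (.inl (add_sub_cancel_left v 1)))⟩

theorem exists_zmod_orderOf_map_mul_eq_add_one {G : Type*} [Group G] (s : G) :
    ∃ e : G → ZMod (orderOf s), ∀ x, e (s * x) = e x + 1 := by
  let r := MulAction.orbitRel (Subgroup.zpowers s) G
  have hrep : ∀ x, ∃ k : ℤ, s ^ k * (Quotient.mk r x).out = x := by
    intro x
    obtain ⟨⟨g, hg⟩, hgx⟩ := Setoid.symm (Quotient.mk_out (s := r) x)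
    obtain ⟨k, rfl⟩ := Subgroup.mem_zpowers_iff.mp hg
    exact ⟨k, hgx⟩
  choose k hk using hrep
  refine ⟨fun x => k x, fun x => ?_⟩
  have hclass : Quotient.mk r (s * x) = Quotient.mk r x :=
    Quotient.sound ⟨⟨s, Subgroup.mem_zpowers s⟩, rfl⟩
  have hpow : s ^ k (s * x) = s ^ (k x + 1) := by
    refine mul_right_cancel (b := (Quotient.mk r x).out) ?_
    calc s ^ k (s * x) * (Quotient.mk r x).out = s * x := by rw [← hclass, hk]
      _ = s * (s ^ k x * (Quotient.mk r x).out) := by rw [hk]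
      _ = s ^ (k x + 1) * (Quotient.mk r x).out := by group
  simpa using (ZMod.intCast_eq_intCast_iff _ _ _).mpr (zpow_eq_zpow_iff_modEq.mp hpow)

theorem image_preimage_singleton_inter_self_eq_empty {α ι : Type*} {g : α → α} {f : α → ι}
    (hf : ∀ x, f (g x) ≠ f x) (i : ι) : g '' (f ⁻¹' {i}) ∩ f ⁻¹' {i} = ∅ := by
  refine Set.eq_empty_of_forall_notMem ?_
  rintro _ ⟨⟨x, hx, rfl⟩, hgx⟩
  exact hf x (hgx.trans hx.symm)

/-- Katětov partition for a left translation by a non-identity group element. -/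
theorem katetov_translation {Γ : Type*} [Group Γ] (s : Γ) (hs : s ≠ 1) :
    ∃ A : Fin 3 → Set Γ, (∀ x, ∃! i, x ∈ A i) ∧
      ∀ i, (fun x => s * x) '' A i ∩ A i = ∅ := by
  obtain ⟨e, he⟩ := exists_zmod_orderOf_map_mul_eq_add_one s
  obtain ⟨c, hc⟩ := ZMod.exists_fin_three_coloring_add_one (mt orderOf_eq_one_iff.mp hs)
  have hcolor : ∀ x, (c ∘ e) (s * x) ≠ (c ∘ e) x := fun x => by
    simpa only [Function.comp_apply, he] using hc (e x)
  exact ⟨fun i => c ∘ e ⁻¹' {i}, fun x => ⟨c (e x), rfl, fun _ hi => hi.symm⟩,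
    image_preimage_singleton_inter_self_eq_empty hcolor⟩
end

section
/- Let Γ be a group and F ⊆ Γ a finite set with e ∉ F. Then there is a finite partition Γ = ⨆_{i ∈ I} Aᵢ such that sAᵢ ∩ Aᵢ = ∅ for every s ∈ F and every i ∈ I; moreover one can take |I| ≤ 3^{|F|}. -/
/-!
A fixed-point-free element `g` of a group acting on `α` splits `α` into `⟨g⟩`-orbits, each of
which is a cycle `ZMod p` with `p ≠ 1` (a line `ℤ = ZMod 0` when `p = 0`) on which `g` acts
as `+1`. Such a cycle or line has a proper 3-colouring, so some `c : α → Fin 3` satisfies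
`c (g • x) ≠ c x`. For the translations `x ↦ s * x`, `s ∈ F`, take the product colouring
`Γ → F → Fin 3`; its fibres are the at most `3 ^ |F|` parts.
-/

open MulAction Subgroup Function

lemma ZMod.val_add_one {n : ℕ} [NeZero n] (k : ZMod n) :
    (k + 1).val = if k.val + 1 = n then 0 else k.val + 1 := by
  have := k.val_lt
  rw [ZMod.val_add, ZMod.val_one_eq_one_mod, Nat.add_mod_mod]
  split_ifs with h
  · rw [h, Nat.mod_self]
  · exact Nat.mod_eq_of_lt (by omega)

theorem ZMod.exists_fin_three_coloring_add_one_ne {n : ℕ} (hn : n ≠ 1) :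
    ∃ c : ZMod n → Fin 3, ∀ k, c (k + 1) ≠ c k := by
  rcases n with _ | _ | m
  · refine ⟨fun k : ℤ => if Even k then 0 else 1, fun (k : ℤ) => ?_⟩
    show (if Even (k + 1) then (0 : Fin 3) else 1) ≠ if Even k then 0 else 1
    by_cases hk : Even k <;> simp [hk]
  · exact absurd rfl hn
  · refine ⟨fun k => if k.val + 1 = m + 2 then 2 else if Even k.val then 0 else 1, fun k => ?_⟩
    dsimp only
    rw [ZMod.val_add_one]
    grind

namespace MulAction

variable {G α : Type*} [Group G] [MulAction G α]

noncomputable def equivSigmaZModZPowers (g : G) :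
    α ≃ Σ q : orbitRel.Quotient (zpowers g) α, ZMod (minimalPeriod (g • ·) q.out) :=
  (selfEquivSigmaOrbits (zpowers g) α).trans
    (Equiv.sigmaCongrRight fun q => orbitZPowersEquiv g q.out)

lemma equivSigmaZModZPowers_symm_apply (g : G) (q : orbitRel.Quotient (zpowers g) α)
    (k : ZMod (minimalPeriod (g • ·) q.out)) :
    (equivSigmaZModZPowers g).symm ⟨q, k⟩ = g ^ (k.cast : ℤ) • q.out := rfl

lemma equivSigmaZModZPowers_zpow_smul_out (g : G) (q : orbitRel.Quotient (zpowers g) α)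
    (k : ℤ) : equivSigmaZModZPowers g (g ^ k • q.out) = ⟨q, k⟩ := by
  rw [← Equiv.eq_symm_apply, equivSigmaZModZPowers_symm_apply, ZMod.coe_intCast,
    zpow_smul_mod_minimalPeriod]

lemma equivSigmaZModZPowers_smul (g : G) (x : α) :
    equivSigmaZModZPowers g (g • x) =
      ⟨(equivSigmaZModZPowers g x).1, (equivSigmaZModZPowers g x).2 + 1⟩ := by
  obtain ⟨⟨q, k⟩, rfl⟩ := (equivSigmaZModZPowers g).symm.surjective x
  rw [Equiv.apply_symm_apply, equivSigmaZModZPowers_symm_apply, smul_smul, mul_self_zpow,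
    equivSigmaZModZPowers_zpow_smul_out]
  simp

theorem exists_fin_three_coloring_smul_ne {g : G} (hg : ∀ x : α, g • x ≠ x) :
    ∃ c : α → Fin 3, ∀ x, c (g • x) ≠ c x := by
  have hperiod (q : orbitRel.Quotient (zpowers g) α) : minimalPeriod (g • ·) q.out ≠ 1 :=
    fun h => hg _ (minimalPeriod_eq_one_iff_isFixedPt.mp h)
  choose c hc using fun q => ZMod.exists_fin_three_coloring_add_one_ne (hperiod q)
  refine ⟨fun x => c _ (equivSigmaZModZPowers g x).2, fun x => ?_⟩
  dsimp only
  rw [equivSigmaZModZPowers_smul]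
  exact hc _ _

theorem exists_coloring_finset_smul_ne {F : Finset G} (hF : ∀ g ∈ F, ∀ x : α, g • x ≠ x) :
    ∃ c : α → F → Fin 3, ∀ g (hg : g ∈ F) x, c (g • x) ⟨g, hg⟩ ≠ c x ⟨g, hg⟩ := by
  choose! c hc using fun g hg => exists_fin_three_coloring_smul_ne (hF g hg)
  exact ⟨fun x g => c g x, fun g hg => hc g hg⟩

end MulAction

lemma Set.image_preimage_singleton_inter_eq_empty {α ι : Type*} {f : α → α} {c : α → ι}
    (hc : ∀ x, c (f x) ≠ c x) (i : ι) : f '' (c ⁻¹' {i}) ∩ c ⁻¹' {i} = ∅ := by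
  ext y
  simp only [Set.mem_inter_iff, Set.mem_image, Set.mem_preimage, Set.mem_singleton_iff,
    Set.mem_empty_iff_false, iff_false, not_and]
  rintro ⟨x, hx, rfl⟩ hfx
  exact hc x (hfx.trans hx.symm)

/-- Finite Katětov partition for a finite set of non-identity translations,
with at most 3^|F| parts. -/
theorem katetov_translation_finset {Γ : Type*} [Group Γ] (F : Finset Γ)
    (hF : (1 : Γ) ∉ F) :
    ∃ (m : ℕ) (A : Fin m → Set Γ), m ≤ 3 ^ F.card ∧ (∀ x, ∃! i, x ∈ A i) ∧
      ∀ s ∈ F, ∀ i, (fun x => s * x) '' A i ∩ A i = ∅ := by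
  classical
  have hfree : ∀ s ∈ F, ∀ x : Γ, s • x ≠ x := fun s hs x h =>
    hF (by rwa [smul_eq_mul, mul_eq_right] at h ▸ hs)
  obtain ⟨c, hc⟩ := exists_coloring_finset_smul_ne hfree
  let e := Fintype.equivFin (F → Fin 3)
  refine ⟨_, fun i => c ⁻¹' {e.symm i}, by simp, fun x => ⟨e (c x), by simp, ?_⟩, ?_⟩
  · rintro i (hi : c x = e.symm i)
    simp [hi]
  · intro s hs i
    exact Set.image_preimage_singleton_inter_eq_empty
      (fun x h => hc s hs x (congrFun h ⟨s, hs⟩)) _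
end

section
/- Let Γ be a discrete group acting on its Stone–Čech compactification βΓ by the continuous extension of left translation. Then this action is free: for every s ∈ Γ with s ≠ e and every x ∈ βΓ, s·x ≠ x. -/
/-!
Under the cyclic group generated by `s`, the group `Γ` splits into orbits, each of which is a
cycle `ZMod m` (with `m = 0` for a bi-infinite orbit) on which `s` acts as `+ 1`; since `s ≠ 1`
no cycle has length one, so each can be properly coloured with three colours. This gives
`c : Γ → Fin 3` with `c (s * t) ≠ c t` (Katětov's lemma for this action). Both sides of
`c (s * t) ≠ c t` extend continuously to `βΓ`, and the set where the extensions agree is open, so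
it would meet the dense image of `Γ` if it contained a fixed point of `s`.
-/

open Function MulAction Subgroup

theorem ZMod.exists_fin_three_coloring {m : ℕ} (hm : m ≠ 1) :
    ∃ χ : ZMod m → Fin 3, ∀ k, χ (k + 1) ≠ χ k := by
  match m, hm with
  | 0, _ =>
    refine ⟨fun k : ℤ => if Even k then 0 else 1, fun k => ?_⟩
    have := Int.even_add_one (n := k)
    dsimp only
    split_ifs <;> tauto
  | n + 2, _ =>
    let χ := SimpleGraph.cycleGraph.tricoloring (n + 2) le_add_self
    exact ⟨χ, fun k => χ.valid (SimpleGraph.cycleGraph_adj.mpr (.inl (add_sub_cancel_left k 1)))⟩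

namespace MulAction

variable {G β : Type*} [Group G] [MulAction G β] (a : G)

noncomputable def zpowersOrbitCoords :
    β ≃ Σ q : orbitRel.Quotient (zpowers a) β, ZMod (minimalPeriod (a • ·) q.out) :=
  (selfEquivSigmaOrbits (zpowers a) β).trans
    (Equiv.sigmaCongrRight fun q => orbitZPowersEquiv a q.out)

theorem zpowersOrbitCoords_symm_apply (q : orbitRel.Quotient (zpowers a) β)
    (k : ZMod (minimalPeriod (a • ·) q.out)) :
    (zpowersOrbitCoords a).symm ⟨q, k⟩ = a ^ (k.cast : ℤ) • q.out := rfl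

theorem zpowersOrbitCoords_zpow_smul_out (q : orbitRel.Quotient (zpowers a) β) (k : ℤ) :
    zpowersOrbitCoords a (a ^ k • q.out) = ⟨q, k⟩ := by
  rw [← Equiv.eq_symm_apply, zpowersOrbitCoords_symm_apply, ZMod.coe_intCast,
    zpow_smul_mod_minimalPeriod]

theorem zpowersOrbitCoords_smul (b : β) :
    zpowersOrbitCoords a (a • b) =
      ⟨(zpowersOrbitCoords a b).1, (zpowersOrbitCoords a b).2 + 1⟩ := by
  obtain ⟨⟨q, k⟩, rfl⟩ := (zpowersOrbitCoords a).symm.surjective b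
  rw [Equiv.apply_symm_apply, zpowersOrbitCoords_symm_apply, smul_smul, ← zpow_one_add,
    add_comm, zpowersOrbitCoords_zpow_smul_out]
  simp

variable {a} in
theorem exists_fin_three_coloring_smul_ne_s8 (h : ∀ b : β, a • b ≠ b) :
    ∃ c : β → Fin 3, ∀ b, c (a • b) ≠ c b := by
  have hperiod (q : orbitRel.Quotient (zpowers a) β) : minimalPeriod (a • ·) q.out ≠ 1 :=
    fun h1 => h q.out (minimalPeriod_eq_one_iff_isFixedPt.mp h1)
  choose χ hχ using fun q => ZMod.exists_fin_three_coloring (hperiod q)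
  refine ⟨fun b => Sigma.uncurry χ (zpowersOrbitCoords a b), fun b => ?_⟩
  dsimp only
  rw [zpowersOrbitCoords_smul]
  exact hχ _ _

end MulAction

theorem stoneCechExtend_ne_self_of_coloring {α Y : Type*} [TopologicalSpace α]
    [TopologicalSpace Y] [DiscreteTopology Y] [CompactSpace Y] {g : α → α} (hg : Continuous g)
    {c : α → Y} (hc : Continuous c) (hcg : ∀ a, c (g a) ≠ c a) (x : StoneCech α) :
    stoneCechExtend (continuous_stoneCechUnit.comp hg) x ≠ x := by
  intro hx
  set G := stoneCechExtend (continuous_stoneCechUnit.comp hg)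
  set C := stoneCechExtend hc
  have hopen : IsOpen {y | C (G y) = C y} :=
    (isOpen_discrete {p : Y × Y | p.1 = p.2}).preimage
      (((continuous_stoneCechExtend hc).comp (continuous_stoneCechExtend _)).prodMk
        (continuous_stoneCechExtend hc))
  obtain ⟨a, ha⟩ := denseRange_stoneCechUnit.exists_mem_open hopen ⟨x, congrArg C hx⟩
  apply hcg a
  simpa only [Set.mem_ofPred_eq, G, C, stoneCechExtend_stoneCechUnit, comp_apply] using ha

/-- The Ellis theorem: the extension of left translation by a non-identity
element of a discrete group to the Stone–Čech compactification has no
fixed points. -/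
theorem ellis_theorem {Γ : Type*} [Group Γ] [TopologicalSpace Γ]
    [DiscreteTopology Γ] (s : Γ) (hs : s ≠ 1) (x : StoneCech Γ) :
    stoneCechExtend
      (g := fun t : Γ => stoneCechUnit (s * t)) continuous_of_discreteTopology
      x ≠ x := by
  obtain ⟨c, hc⟩ := exists_fin_three_coloring_smul_ne_s8 (a := s) (β := Γ)
    fun t h => hs (mul_eq_right.mp h)
  exact stoneCechExtend_ne_self_of_coloring (g := (s * ·)) continuous_of_discreteTopology
    continuous_of_discreteTopology hc x
end

section
/- Let Γ be a group. For every s ≠ e in Γ, the map x ↦ sx on Γ extends to a fixed-point-free homeomorphism of the space of ultrafilters on Γ. -/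
open Set Filter

section Aux

variable {Γ : Type*} [Group Γ]

/-- `Ultrafilter.map` is continuous for the ultrafilter topology. -/
lemma continuous_ultrafilter_map {α β : Type*} (f : α → β) :
    Continuous (Ultrafilter.map f : Ultrafilter α → Ultrafilter β) := by
  apply continuous_generateFrom_iff.mpr
  rintro _ ⟨A, rfl⟩
  have : (Ultrafilter.map f) ⁻¹' {u | A ∈ u} = {u | f ⁻¹' A ∈ u} := by
    ext U; exact Ultrafilter.mem_map
  rw [this]
  exact ultrafilter_isOpen_basic _

/-- The orbit equivalence relation of left translation by powers of `s`. -/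
def transRel (s : Γ) : Setoid Γ :=
  ⟨fun x y => ∃ k : ℤ, x = s ^ k * y, by
    constructor
    · intro x; exact ⟨0, by group⟩
    · rintro x y ⟨k, rfl⟩; exact ⟨-k, by group⟩
    · rintro x y z ⟨k, rfl⟩ ⟨j, rfl⟩; exact ⟨k + j, by group⟩⟩

/-- Katětov coloring: a 3-coloring of `Γ` moved off itself by left translation by `s`. -/
lemma exists_coloring (s : Γ) (hs : s ≠ 1) :
    ∃ c : Γ → ℕ, (∀ x, c x < 3) ∧ ∀ x, c (s * x) ≠ c x := by
  classical
  set n := orderOf s with hn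
  -- representative of the orbit of `x`
  let r : Γ → Γ := fun x => (Quotient.mk (transRel s) x).out
  have hrel : ∀ x, ∃ k : ℤ, x = s ^ k * r x := by
    intro x
    have : (transRel s).r (r x) x := Quotient.exact (Quotient.out_eq _)
    obtain ⟨k, hk⟩ := this
    exact ⟨-k, by rw [hk]; simp [mul_assoc, ← zpow_add]⟩
  let k : Γ → ℤ := fun x => (hrel x).choose
  have hk : ∀ x, x = s ^ k x * r x := fun x => (hrel x).choose_spec
  have hrs : ∀ x, r (s * x) = r x := by
    intro x
    have : (Quotient.mk (transRel s) (s * x)) = Quotient.mk (transRel s) x :=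
      Quotient.sound ⟨1, by simp⟩
    simp only [r, this]
  have key : ∀ x, s ^ k (s * x) = s ^ (k x + 1) := by
    intro x
    have h1 : s * x = s ^ k (s * x) * r x := by rw [← hrs x]; exact hk (s * x)
    have h2 : s * x = s ^ (k x + 1) * r x := by
      rw [add_comm, zpow_add, zpow_one, mul_assoc]
      exact congrArg (s * ·) (hk x)
    exact mul_right_cancel (h1.symm.trans h2)
  have keymod : ∀ x, ((k (s * x) : ZMod n)) = (k x : ZMod n) + 1 := by
    intro x
    have hd : (n : ℤ) ∣ k (s * x) - (k x + 1) :=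
      orderOf_dvd_sub_iff_zpow_eq_zpow.mpr (key x)
    have : ((k (s * x) - (k x + 1) : ℤ) : ZMod n) = 0 :=
      (ZMod.intCast_zmod_eq_zero_iff_dvd _ _).mpr hd
    push_cast at this
    linear_combination this
  have hn1 : n ≠ 1 := fun h => hs (orderOf_eq_one_iff.mp (by rw [← hn]; exact h))
  clear_value n
  rcases Nat.eq_zero_or_pos n with hn0 | hnpos
  · -- infinite order : k is determined mod nothing, use parity of |k|
    refine ⟨fun x => (k x).natAbs % 2, fun x => by show (k x).natAbs % 2 < 3; omega,
      fun x => ?_⟩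
    show (k (s * x)).natAbs % 2 ≠ (k x).natAbs % 2
    have := keymod x
    rw [hn0] at this
    -- ZMod 0 = ℤ
    have hZ : k (s * x) = k x + 1 := by exact_mod_cast this
    rw [hZ]
    omega
  · -- finite order n ≥ 2 (n ≠ 1 since s ≠ 1)
    have hn2 : 2 ≤ n := by omega
    have : NeZero n := ⟨by omega⟩
    let g : ZMod n → ℕ := fun a => if a.val = n - 1 then 2 else a.val % 2
    refine ⟨fun x => g ((k x : ZMod n)),
      fun x => by show g _ < 3; simp only [g]; split <;> omega, fun x => ?_⟩
    show g ((k (s * x) : ZMod n)) ≠ g ((k x : ZMod n))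
    rw [keymod x]
    set a : ZMod n := (k x : ZMod n)
    have hv : a.val < n := ZMod.val_lt a
    have hadd : (a + 1).val = (a.val + 1) % n := by
      rw [ZMod.val_add, ZMod.val_one_eq_one_mod,
        Nat.mod_eq_of_lt (show 1 < n by omega)]
    simp only [g, hadd]
    rcases eq_or_ne a.val (n - 1) with h | h
    · have h0 : (a.val + 1) % n = 0 := by
        rw [h]; rw [show n - 1 + 1 = n by omega]; simp
      rw [h0, if_pos h, if_neg (show ¬(0 = n - 1) by omega)]
      omega
    · have hlt : a.val + 1 < n := by omega
      rw [Nat.mod_eq_of_lt hlt, if_neg h]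
      split <;> omega

end Aux

/-- For every non-identity group element, left translation extends to a
fixed-point-free homeomorphism of the space of ultrafilters. -/
theorem ultrafilter_extension_fixed_point_free {Γ : Type*} [Group Γ]
    (s : Γ) (hs : s ≠ 1) :
    ∃ φ : Ultrafilter Γ ≃ₜ Ultrafilter Γ,
      (∀ x : Γ, φ (pure x) = pure (s * x)) ∧ ∀ U : Ultrafilter Γ, φ U ≠ U := by
  classical
  refine ⟨⟨⟨Ultrafilter.map (s * ·), Ultrafilter.map (s⁻¹ * ·), ?_, ?_⟩,
      continuous_ultrafilter_map _, continuous_ultrafilter_map _⟩, ?_, ?_⟩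
  · intro U
    show Ultrafilter.map _ (Ultrafilter.map _ U) = U
    rw [Ultrafilter.map_map]
    have : ((s⁻¹ * ·) ∘ (s * ·)) = id := by funext x; simp [← mul_assoc]
    rw [this, Ultrafilter.map_id]
  · intro U
    show Ultrafilter.map _ (Ultrafilter.map _ U) = U
    rw [Ultrafilter.map_map]
    have : ((s * ·) ∘ (s⁻¹ * ·)) = id := by funext x; simp [← mul_assoc]
    rw [this, Ultrafilter.map_id]
  · intro x
    exact Ultrafilter.map_pure _ _
  · intro U h
    obtain ⟨c, hc3, hcs⟩ := exists_coloring s hs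
    have hmem' : {m : ℕ | m < 3} ∈ Ultrafilter.map c U := by
      rw [Ultrafilter.mem_map]
      have : c ⁻¹' {m | m < 3} = Set.univ := Set.eq_univ_of_forall fun x => hc3 x
      rw [this]; exact univ_mem
    obtain ⟨i, _, hi⟩ := Ultrafilter.eq_pure_of_finite_mem (Set.finite_Iio 3) hmem'
    have hA : c ⁻¹' {i} ∈ U := by
      rw [← Ultrafilter.mem_map, hi]; simp
    have hUU : Ultrafilter.map (fun x => s * x) U = U := h
    have hA' : (fun x => s * x) ⁻¹' (c ⁻¹' {i}) ∈ U := by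
      have : c ⁻¹' {i} ∈ Ultrafilter.map (fun x => s * x) U := by rw [hUU]; exact hA
      rwa [Ultrafilter.mem_map] at this
    obtain ⟨x, hx1, hx2⟩ := Ultrafilter.nonempty_of_mem (inter_mem hA hA')
    exact hcs x (hx2.trans hx1.symm)
end

section
/- Let Γ be a discrete group. The image of the map Φ : ℓ∞(Γ) ⊗_{alg} ℓ∞(Γ) → ℓ∞(Γ, ℓ∞(Γ)), Φ(f ⊗ g)(s,t) = f(st)g(t), spans a subspace whose closure in the topology of uniform convergence on sets K × Γ (K ⊆ Γ finite) contains 1_{\{v\}} ⊗ 1 for every v ∈ Γ. -/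
/-!
For `γ ≠ 1`, left multiplication by `γ` has no fixed points, and each of its orbits is a copy of
`ZMod (orderOf γ)` on which it acts as `x ↦ x + 1`; a proper 3-colouring of that cycle (or of `ℤ`)
gives `c_γ : Γ → Fin 3` with `c_γ (γ t) ≠ c_γ t` (Katětov). For finite `K`, let `C` be the product
of the colourings `c_{v⁻¹ s}`, `s ∈ K`. Then `∑ i, Δ(1_{C(v⁻¹ ·) = i}) (1 ⊗ 1_{C = i})` takes the
value `[C (v⁻¹ s t) = C t]` at `(s, t)`, which equals `[s = v]` for every `s ∈ K`.
-/

open Subgroup QuotientGroup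

section Coloring

variable {G : Type*} [Group G]

theorem intCast_eq_of_zpow_eq {x : G} {a b : ℤ} (h : x ^ a = x ^ b) :
    (a : ZMod (orderOf x)) = b :=
  (ZMod.intCast_eq_intCast_iff_dvd_sub _ _ _).mpr (orderOf_dvd_sub_iff_zpow_eq_zpow.mpr h.symm)

theorem exists_zmod_orderOf_coordinate (γ : G) :
    ∃ κ : G → ZMod (orderOf γ), ∀ t, κ (γ * t) = κ t + 1 := by
  -- `r t` is a base point of the orbit `zpowers γ * t`, and `κ t` the exponent carrying it to `t`.
  let r : G → G := fun t => (Quotient.mk (rightRel (zpowers γ)) t).out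
  have hr : ∀ t, r (γ * t) = r t := fun t =>
    congrArg Quotient.out <| Quotient.sound <| rightRel_apply.mpr <| by
      rw [mul_inv_rev, mul_inv_cancel_left]
      exact inv_mem (mem_zpowers γ)
  have hmem : ∀ t, ∃ k : ℤ, γ ^ k = t * (r t)⁻¹ := fun t =>
    mem_zpowers_iff.mp (rightRel_apply.mp (Quotient.mk_out (s := rightRel (zpowers γ)) t))
  choose k hk using hmem
  refine ⟨fun t => k t, fun t => ?_⟩
  rw [add_comm, ← Int.cast_one, ← Int.cast_add]
  exact intCast_eq_of_zpow_eq (by rw [hk, hr, zpow_one_add, hk, mul_assoc])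

theorem exists_fin_three_coloring_zmod {n : ℕ} (hn : n ≠ 1) :
    ∃ φ : ZMod n → Fin 3, ∀ x, φ (x + 1) ≠ φ x := by
  match n, hn with
  | 0, _ =>
    have : ∃ φ : ℤ → Fin 3, ∀ x, φ (x + 1) ≠ φ x :=
      ⟨fun x => if Even x then 0 else 1, fun x => by
        by_cases hx : Even x <;> simp [hx, parity_simps]⟩
    exact this
  | m + 2, _ =>
    let c := SimpleGraph.cycleGraph.tricoloring (m + 2) (by omega)
    exact ⟨c, fun x => c.valid (SimpleGraph.cycleGraph_adj.mpr (.inl (add_sub_cancel_left x 1)))⟩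

theorem exists_fin_three_coloring_mul_ne {γ : G} (hγ : γ ≠ 1) :
    ∃ c : G → Fin 3, ∀ t, c (γ * t) ≠ c t := by
  obtain ⟨κ, hκ⟩ := exists_zmod_orderOf_coordinate γ
  obtain ⟨φ, hφ⟩ :=
    exists_fin_three_coloring_zmod (n := orderOf γ) (by rwa [Ne, orderOf_eq_one_iff])
  exact ⟨φ ∘ κ, fun t => by simpa [hκ] using hφ (κ t)⟩

theorem exists_coloring_mul_ne {ι : Type*} (γ : ι → G) :
    ∃ C : G → ι → Fin 3, ∀ i, γ i ≠ 1 → ∀ t, C (γ i * t) ≠ C t := by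
  have : ∀ i, ∃ c : G → Fin 3, γ i ≠ 1 → ∀ t, c (γ i * t) ≠ c t := fun i => by
    by_cases hi : γ i = 1
    · exact ⟨0, fun h => absurd hi h⟩
    · obtain ⟨c, hc⟩ := exists_fin_three_coloring_mul_ne hi
      exact ⟨c, fun _ => hc⟩
  choose c hc using this
  exact ⟨fun t i => c i t, fun i hi t h => hc i hi t (congrFun h i)⟩

end Coloring

def comulImage (Γ : Type*) [Group Γ] : Set (Γ × Γ → ℂ) :=
  {h | ∃ f g : Γ → ℂ, (∃ C : ℝ, ∀ x, ‖f x‖ ≤ C) ∧ (∃ C : ℝ, ∀ x, ‖g x‖ ≤ C) ∧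
    h = fun p => f (p.1 * p.2) * g p.2}

theorem ite_eq_mem_span_comulImage {Γ ι : Type*} [Group Γ] [Finite ι] [DecidableEq ι]
    (c₁ c₂ : Γ → ι) :
    (fun p : Γ × Γ => if c₁ (p.1 * p.2) = c₂ p.2 then (1 : ℂ) else 0) ∈
      Submodule.span ℂ (comulImage Γ) := by
  have := Fintype.ofFinite ι
  have hsum : (fun p : Γ × Γ => if c₁ (p.1 * p.2) = c₂ p.2 then (1 : ℂ) else 0) =
      ∑ i, fun p : Γ × Γ =>
        (if c₁ (p.1 * p.2) = i then (1 : ℂ) else 0) * (if c₂ p.2 = i then 1 else 0) := by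
    ext p
    simp [Finset.sum_apply, eq_comm]
  rw [hsum]
  refine Submodule.sum_mem _ fun i _ => Submodule.subset_span
    ⟨fun u => if c₁ u = i then 1 else 0, fun u => if c₂ u = i then 1 else 0,
      ⟨1, fun x => ?_⟩, ⟨1, fun x => ?_⟩, rfl⟩ <;> dsimp only <;> split_ifs <;> simp

/-- For every v ∈ Γ, the element 1_{v} ⊗ 1 lies in the closure (uniform
convergence on sets K × Γ, K finite) of the span of the functions
(s,t) ↦ f(st) g(t) with f, g bounded. -/
theorem ellis_ellwood_delta {Γ : Type*} [Group Γ] [DecidableEq Γ] (v : Γ)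
    (ε : ℝ) (hε : 0 < ε) (K : Finset Γ) :
    ∃ h ∈ Submodule.span ℂ {h : Γ × Γ → ℂ | ∃ f g : Γ → ℂ,
        (∃ C : ℝ, ∀ x, ‖f x‖ ≤ C) ∧ (∃ C : ℝ, ∀ x, ‖g x‖ ≤ C) ∧
        h = fun p => f (p.1 * p.2) * g p.2},
      ∀ s ∈ K, ∀ t : Γ,
        ‖h (s, t) - (if s = v then 1 else 0)‖ ≤ ε := by
  obtain ⟨C, hC⟩ := exists_coloring_mul_ne fun s : K => v⁻¹ * s
  refine ⟨_, ite_eq_mem_span_comulImage (fun u => C (v⁻¹ * u)) C, fun s hs t => ?_⟩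
  have hdiag : C (v⁻¹ * (s * t)) = C t ↔ s = v := by
    refine ⟨fun h => by_contra fun hsv => hC ⟨s, hs⟩ ?_ t ?_,
      fun h => by rw [h, inv_mul_cancel_left]⟩
    · rwa [Ne, inv_mul_eq_one, eq_comm]
    · rwa [← mul_assoc] at h
  simp only [hdiag, sub_self, norm_zero]
  exact hε.le
end

section
/- Let Γ be a discrete group. The linear span of the functions (s,t) ↦ f(st)g(t), with f, g ∈ ℓ∞(Γ), is dense in ℓ∞(Γ × Γ) in the topology of uniform convergence on sets of the form K × Γ with K ⊆ Γ finite. -/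
/-!
Colour `Γ` with finitely many colours `c` so that `c (u * t) ≠ c t` for every `u ≠ 1` in `K⁻¹ K`
(a Katětov partition), by greedily colouring the Cayley graph of `K⁻¹ K`, whose degrees are bounded.
Then `∑ v ∈ K, ∑ i, 𝟙[c (v⁻¹ s t) = i] · 𝟙[c t = i] F (v, t)` is a finite sum of the generating
functions, and for `s ∈ K` only the term `v = s` survives, so it agrees with `F` on `K × Γ` exactly.
-/

theorem Nat.exists_le_notMem_of_encard_le {A : Set ℕ} {d : ℕ} (hA : A.encard ≤ d) :
    ∃ n ≤ d, n ∉ A := by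
  by_contra! h
  have hsub : (Finset.range (d + 1) : Set ℕ) ⊆ A := fun n hn =>
    h n (Nat.lt_succ_iff.mp (Finset.mem_range.mp hn))
  have := (Set.encard_le_encard hsub).trans hA
  simp only [Set.encard_coe_eq_coe_finsetCard, Finset.card_range, Nat.cast_add, Nat.cast_one]
    at this
  exact absurd this (by simpa using ENat.natCast_lt_natCast.mpr d.lt_succ_self)

open scoped Pointwise

namespace SimpleGraph

theorem colorable_succ_of_encard_neighborSet_le {V : Type*} (G : SimpleGraph V) {d : ℕ}
    (hG : ∀ v, (G.neighborSet v).encard ≤ d) : G.Colorable (d + 1) := by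
  let r := WellOrderingRel (α := V)
  -- greedy colouring along a well-order: the least colour unused by the earlier neighbours
  obtain ⟨c, hc⟩ : ∃ c : V → ℕ, ∀ v, c v = sInf {n | ∀ w, r w v → G.Adj v w → c w ≠ n} :=
    let F (v : V) (c' : ∀ w, r w v → ℕ) : ℕ :=
      sInf {n | ∀ w (hw : r w v), G.Adj v w → c' w hw ≠ n}
    ⟨WellOrderingRel.isWellOrder.wf.fix F, WellOrderingRel.isWellOrder.wf.fix_eq F⟩
  have hfree : ∀ v, ∃ n ≤ d, ∀ w, r w v → G.Adj v w → c w ≠ n := by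
    intro v
    obtain ⟨n, hnd, hn⟩ := Nat.exists_le_notMem_of_encard_le
      ((Set.encard_image_le c _).trans (hG v))
    exact ⟨n, hnd, fun w _ hvw hwn => hn ⟨w, hvw, hwn⟩⟩
  have hle : ∀ v, c v ≤ d := fun v => by
    obtain ⟨n, hnd, hn⟩ := hfree v
    exact hc v ▸ (Nat.sInf_le (s := {n | ∀ w, r w v → G.Adj v w → c w ≠ n}) hn).trans hnd
  have hne : ∀ v w, r w v → G.Adj v w → c w ≠ c v := fun v w hwv hvw => by
    obtain ⟨n, -, hn⟩ := hfree v
    exact hc v ▸ Nat.sInf_mem (s := {n | ∀ w, r w v → G.Adj v w → c w ≠ n}) ⟨n, hn⟩ w hwv hvw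
  refine ⟨Coloring.mk (fun v => ⟨c v, Nat.lt_succ_of_le (hle v)⟩) fun {v w} hvw => ?_⟩
  rw [Ne, Fin.mk.injEq]
  rcases trichotomous_of r v w with h | rfl | h
  · exact hne w v h hvw.symm
  · exact (G.irrefl hvw).elim
  · exact (hne v w h hvw).symm

theorem neighborSet_mulCayley_subset {M : Type*} [Group M] (s : Set M) (u : M) :
    (mulCayley s).neighborSet u ⊆ u • (s ∪ s⁻¹) := by
  intro v hv
  rw [mem_neighborSet, mulCayley_adj] at hv
  rw [Set.mem_smul_set_iff_inv_smul_mem, smul_eq_mul, Set.mem_union, Set.mem_inv, mul_inv_rev,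
    inv_inv]
  exact hv.2

theorem encard_neighborSet_mulCayley_le {M : Type*} [Group M] (s : Set M) (u : M) :
    ((mulCayley s).neighborSet u).encard ≤ 2 * s.encard :=
  calc _ ≤ (u • (s ∪ s⁻¹)).encard := Set.encard_le_encard (neighborSet_mulCayley_subset s u)
    _ ≤ s.encard + s⁻¹.encard := by rw [Set.encard_smul_set]; exact Set.encard_union_le _ _
    _ = 2 * s.encard := by rw [Set.encard_inv, two_mul]

end SimpleGraph

open SimpleGraph in
theorem exists_fin_coloring_mul_ne {G : Type*} [Group G] {S : Set G} (hS : S.Finite) :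
    ∃ n, ∃ c : G → Fin n, ∀ u ∈ S, u ≠ 1 → ∀ t, c (u * t) ≠ c t := by
  obtain ⟨C⟩ : (mulCayley S).Colorable (2 * S.ncard + 1) :=
    colorable_succ_of_encard_neighborSet_le _ fun v => by
      simpa [hS.cast_ncard_eq] using encard_neighborSet_mulCayley_le S v
  refine ⟨_, fun x => C x⁻¹, fun u hu hu1 t => C.valid ?_⟩
  rw [mulCayley_adj]
  exact ⟨by simpa using hu1, Or.inl (by simpa [mul_assoc] using hu)⟩

theorem sum_sum_ite_coloring_eq {Γ ι R : Type*} [Group Γ] [Fintype ι] [DecidableEq ι]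
    [NonAssocSemiring R] (F : Γ × Γ → R) {K : Finset Γ} (c : Γ → ι) {s t : Γ} (hs : s ∈ K)
    (hc : ∀ v ∈ K, v ≠ s → c (v⁻¹ * (s * t)) ≠ c t) :
    ∑ v ∈ K, ∑ i, (if c (v⁻¹ * (s * t)) = i then 1 else 0) * (if c t = i then F (v, t) else 0) =
      F (s, t) := by
  simp only [ite_mul, one_mul, zero_mul, Finset.sum_ite_eq, Finset.mem_univ, if_true]
  rw [Finset.sum_eq_single_of_mem s hs fun v hv hvs => if_neg (hc v hv hvs).symm,
    inv_mul_cancel_left, if_pos rfl]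

/-- Ellwood freeness of the action of a discrete group on its Stone–Čech
compactification: the span of (s,t) ↦ f(st) g(t) is dense in ℓ∞(Γ × Γ) for
the topology of uniform convergence on sets K × Γ with K finite. -/
theorem ellis_ellwood_density {Γ : Type*} [Group Γ]
    (F : Γ × Γ → ℂ) (hF : ∃ C : ℝ, ∀ p, ‖F p‖ ≤ C)
    (ε : ℝ) (hε : 0 < ε) (K : Finset Γ) :
    ∃ h ∈ Submodule.span ℂ {h : Γ × Γ → ℂ | ∃ f g : Γ → ℂ,
        (∃ C : ℝ, ∀ x, ‖f x‖ ≤ C) ∧ (∃ C : ℝ, ∀ x, ‖g x‖ ≤ C) ∧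
        h = fun p => f (p.1 * p.2) * g p.2},
      ∀ s ∈ K, ∀ t : Γ, ‖h (s, t) - F (s, t)‖ ≤ ε := by
  obtain ⟨C, hC⟩ := hF
  obtain ⟨n, c, hc⟩ := exists_fin_coloring_mul_ne (K.finite_toSet.inv.mul K.finite_toSet)
  refine ⟨∑ v ∈ K, ∑ i, fun p => (if c (v⁻¹ * (p.1 * p.2)) = i then 1 else 0) *
      (if c p.2 = i then F (v, p.2) else 0), Submodule.sum_mem _ fun v _ => Submodule.sum_mem _
      fun i _ => Submodule.subset_span ⟨fun x => if c (v⁻¹ * x) = i then 1 else 0,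
        fun t => if c t = i then F (v, t) else 0, ⟨1, fun x => ?_⟩, ⟨C, fun t => ?_⟩, rfl⟩,
    fun s hs t => ?_⟩
  · dsimp only
    split_ifs <;> simp
  · dsimp only
    split_ifs
    · exact hC _
    · exact norm_zero.trans_le ((norm_nonneg _).trans (hC (v, t)))
  · have hsep : ∀ v ∈ K, v ≠ s → c (v⁻¹ * (s * t)) ≠ c t := fun v hv hvs => by
      rw [← mul_assoc]
      exact hc _ (Set.mul_mem_mul (Set.inv_mem_inv.mpr hv) hs) (by rwa [Ne, inv_mul_eq_one]) t
    simp only [Finset.sum_apply]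
    rw [sum_sum_ite_coloring_eq F c hs hsep, sub_self, norm_zero]
    exact hε.le
end

section
/- Let M be a cancellative monoid (or more generally a set with a family of fixed-point-free maps closed under the needed compositions) and s ∈ M an element such that left multiplication by s has no fixed point and is injective. Then there is a partition M = A₁ ⊔ A₂ ⊔ A₃ with sAᵢ ∩ Aᵢ = ∅ for each i. -/
/-!
The colour classes `A i` are those of a proper 3-colouring of the graph with edges `x — f x`.
By Zorn's lemma there is a maximal partial such colouring, and it colours every point: since `f`
is injective and fixed-point free, an uncoloured `x` has at most two neighbours, `f x` and its
`f`-preimage, so one of the three colours is still free for `x`.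
-/

open Function Set

namespace Katetov

variable {α : Type*} {f : α → α}

structure IsPartialColoring (f : α → α) (A : Fin 3 → Set α) : Prop where
  eq_of_mem {x : α} {i j : Fin 3} : x ∈ A i → x ∈ A j → i = j
  apply_notMem {x : α} {i : Fin 3} : x ∈ A i → f x ∉ A i

theorem isPartialColoring_sSup {c : Set (Fin 3 → Set α)} (hc : IsChain (· ≤ ·) c)
    (hcol : ∀ A ∈ c, IsPartialColoring f A) : IsPartialColoring f (sSup c) := by
  have mem_sSup {x : α} {i : Fin 3} : x ∈ sSup c i ↔ ∃ A ∈ c, x ∈ A i := by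
    simp [sSup_apply]
  constructor
  · intro x i j hi hj
    obtain ⟨A, hA, hxA⟩ := mem_sSup.1 hi
    obtain ⟨B, hB, hxB⟩ := mem_sSup.1 hj
    obtain ⟨C, hC, hAC, hBC⟩ := hc.directedOn A hA B hB
    exact (hcol C hC).eq_of_mem (hAC i hxA) (hBC j hxB)
  · intro x i hx hfx
    obtain ⟨A, hA, hxA⟩ := mem_sSup.1 hx
    obtain ⟨B, hB, hfxB⟩ := mem_sSup.1 hfx
    obtain ⟨C, hC, hAC, hBC⟩ := hc.directedOn A hA B hB
    exact (hcol C hC).apply_notMem (hAC i hxA) (hBC i hfxB)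

theorem exists_maximal_isPartialColoring (f : α → α) :
    ∃ A, Maximal (IsPartialColoring f) A :=
  zorn_le₀ {A | IsPartialColoring f A} fun c hcP hc =>
    ⟨sSup c, isPartialColoring_sSup hc hcP, fun _ => le_sSup⟩

namespace IsPartialColoring

variable {A : Fin 3 → Set α}

theorem exists_eq_of_mem (hA : IsPartialColoring f A) (x : α) :
    ∃ a, ∀ j, x ∈ A j → j = a := by
  by_cases h : ∃ i, x ∈ A i
  · obtain ⟨i, hi⟩ := h
    exact ⟨i, fun j hj => hA.eq_of_mem hj hi⟩
  · exact ⟨0, fun j hj => absurd ⟨j, hj⟩ h⟩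

theorem exists_eq_of_mem_of_apply_eq (hA : IsPartialColoring f A) (hf : Injective f)
    (x : α) : ∃ b, ∀ j, ∀ y ∈ A j, f y = x → j = b := by
  by_cases h : ∃ y, f y = x
  · obtain ⟨y, rfl⟩ := h
    obtain ⟨b, hb⟩ := hA.exists_eq_of_mem y
    exact ⟨b, fun j z hz hzy => hb j (hf hzy ▸ hz)⟩
  · exact ⟨0, fun j y _ hy => absurd ⟨y, hy⟩ h⟩

theorem update_insert (hA : IsPartialColoring f A) {x : α} {i : Fin 3}
    (hx : ∀ j, x ∉ A j) (hfx : f x ≠ x) (hfxi : f x ∉ A i)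
    (hpre : ∀ y ∈ A i, f y ≠ x) :
    IsPartialColoring f (update A i (insert x (A i))) := by
  have mem_update {y : α} {j : Fin 3} :
      y ∈ update A i (insert x (A i)) j ↔ (j = i ∧ y = x) ∨ y ∈ A j := by
    rcases eq_or_ne j i with rfl | hji <;> simp [update_of_ne, *]
  constructor
  · intro y j k hj hk
    rw [mem_update] at hj hk
    rcases hj with ⟨rfl, rfl⟩ | hj <;> rcases hk with ⟨rfl, hyx⟩ | hk
    · rfl
    · exact absurd hk (hx k)
    · exact absurd (hyx ▸ hj) (hx j)
    · exact hA.eq_of_mem hj hk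
  · intro y j hj hfy
    rw [mem_update] at hj hfy
    rcases hj with ⟨rfl, rfl⟩ | hj
    · exact hfy.elim (fun h => hfx h.2) hfxi
    · rcases hfy with ⟨rfl, hfyx⟩ | hfy
      · exact hpre y hj hfyx
      · exact hA.apply_notMem hj hfy

end IsPartialColoring

theorem exists_mem_of_maximal_isPartialColoring {A : Fin 3 → Set α}
    (hA : Maximal (IsPartialColoring f) A) (hf : Injective f) (hfix : ∀ x, f x ≠ x)
    (x : α) : ∃ i, x ∈ A i := by
  by_contra! hx
  obtain ⟨a, ha⟩ := hA.prop.exists_eq_of_mem (f x)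
  obtain ⟨b, hb⟩ := hA.prop.exists_eq_of_mem_of_apply_eq hf x
  obtain ⟨i, hia, hib⟩ : ∃ i : Fin 3, i ≠ a ∧ i ≠ b :=
    (by decide : ∀ a b : Fin 3, ∃ i, i ≠ a ∧ i ≠ b) a b
  have hext := hA.prop.update_insert hx (hfix x) (fun h => hia (ha i h))
    (fun y hy hyx => hib (hb i y hy hyx))
  have hle : A ≤ update A i (insert x (A i)) := by
    intro j
    rcases eq_or_ne j i with rfl | hji
    · simp [subset_insert]
    · simp [update_of_ne hji]
  exact hx i (hA.le_of_ge hext hle i (by simp))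

theorem exists_fin_three_partition_image_inter_eq_empty (hf : Injective f)
    (hfix : ∀ x, f x ≠ x) :
    ∃ A : Fin 3 → Set α, (∀ x, ∃! i, x ∈ A i) ∧ ∀ i, f '' A i ∩ A i = ∅ := by
  obtain ⟨A, hA⟩ := exists_maximal_isPartialColoring f
  refine ⟨A, fun x => ?_, fun i => ?_⟩
  · obtain ⟨i, hi⟩ := exists_mem_of_maximal_isPartialColoring hA hf hfix x
    exact ⟨i, hi, fun j hj => hA.prop.eq_of_mem hj hi⟩
  · rw [eq_empty_iff_forall_notMem]
    rintro _ ⟨⟨x, hx, rfl⟩, hfx⟩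
    exact hA.prop.apply_notMem hx hfx

end Katetov

/-- Katětov's lemma applied to a fixed-point-free injective left translation
in a monoid. -/
theorem katetov_monoid {M : Type*} [Monoid M] (s : M)
    (hfp : ∀ x : M, s * x ≠ x)
    (hinj : Function.Injective (fun x : M => s * x)) :
    ∃ A : Fin 3 → Set M, (∀ x, ∃! i, x ∈ A i) ∧
      ∀ i, (fun x => s * x) '' A i ∩ A i = ∅ :=
  Katetov.exists_fin_three_partition_image_inter_eq_empty hinj hfp
end
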